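/- arXiv:gr-qc/0501062 — 3 statements merged into one kernel-verified Lean document; each statement's English description precedes it below -/
import Mathlib

section
/- Let (f, λ, μ, φ) be a regular solution of the surface-symmetric Einstein–Vlasov–scalar field system in areal coordinates on [1,T) with k ∈ {0, −1}. Then for every t ∈ [1,T) and r ∈ ℝ one has the identity e^{2μ(t,r)} = [ (e^{−2μ̊(r)} + k)/t − k − (8π/t)∫₁ᵗ s² p(s,r) ds ]^{−1}, and consequently (since p ≥ 0) the lower bound e^{2μ(t,r)} ≥ t/(C₀ − k t), where C₀ = k + sup{ e^{−2μ̊(r)} : r ∈ [0,1] }. -/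
open MeasureTheory Real Filter

noncomputable section

/-- Partial derivative with respect to the first (time) variable. -/
def ptd (u : ℝ → ℝ → ℝ) (t r : ℝ) : ℝ := deriv (fun s => u s r) t

/-- Partial derivative with respect to the second (space) variable. -/
def prd (u : ℝ → ℝ → ℝ) (t r : ℝ) : ℝ := deriv (fun x => u t x) r

/-- The kinematic factor `√(1 + w² + F/t²)`. -/
def vq (t w F : ℝ) : ℝ := Real.sqrt (1 + w ^ 2 + F / t ^ 2)

/-- The energy density ρ. -/
def rho (lam mu phi : ℝ → ℝ → ℝ) (f : ℝ → ℝ → ℝ → ℝ → ℝ) (t r : ℝ) : ℝ :=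
  Real.pi / t ^ 2 * (∫ w : ℝ, ∫ F in Set.Ioi (0 : ℝ), vq t w F * f t r w F)
    + (1 / 2) * (Real.exp (-2 * mu t r) * (ptd phi t r) ^ 2
      + Real.exp (-2 * lam t r) * (prd phi t r) ^ 2)

/-- The radial pressure p. -/
def pres (lam mu phi : ℝ → ℝ → ℝ) (f : ℝ → ℝ → ℝ → ℝ → ℝ) (t r : ℝ) : ℝ :=
  Real.pi / t ^ 2 * (∫ w : ℝ, ∫ F in Set.Ioi (0 : ℝ), w ^ 2 / vq t w F * f t r w F)
    + (1 / 2) * (Real.exp (-2 * mu t r) * (ptd phi t r) ^ 2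
      + Real.exp (-2 * lam t r) * (prd phi t r) ^ 2)

/-- The momentum density j. -/
def jmom (lam mu phi : ℝ → ℝ → ℝ) (f : ℝ → ℝ → ℝ → ℝ → ℝ) (t r : ℝ) : ℝ :=
  Real.pi / t ^ 2 * (∫ w : ℝ, ∫ F in Set.Ioi (0 : ℝ), w * f t r w F)
    - Real.exp (-(lam t r + mu t r)) * ptd phi t r * prd phi t r

/-- The tangential pressure q. -/
def qmom (lam mu phi : ℝ → ℝ → ℝ) (f : ℝ → ℝ → ℝ → ℝ → ℝ) (t r : ℝ) : ℝ :=
  Real.pi / t ^ 4 * (∫ w : ℝ, ∫ F in Set.Ioi (0 : ℝ), F / vq t w F * f t r w F)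
    + Real.exp (-2 * mu t r) * (ptd phi t r) ^ 2
    - Real.exp (-2 * lam t r) * (prd phi t r) ^ 2

/-- Membership in the time domain `[1, T)` (with `T ≤ ∞` an extended real). -/
def InDom (T : EReal) (t : ℝ) : Prop := 1 ≤ t ∧ (t : EReal) < T

/-- A regular solution of the surface-symmetric Einstein–Vlasov–scalar field system
in areal coordinates on the time interval `[1, T)`, with curvature parameter `k`.
All unknowns are periodic of period 1 in `r`, `f` is nonnegative with bounded
support in `(w, F)` locally uniformly in `t`, and the Vlasov, Einstein and wave
equations hold on the domain. -/
structure IsEVS (k : ℝ) (T : EReal) (lam mu phi : ℝ → ℝ → ℝ)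
    (f : ℝ → ℝ → ℝ → ℝ → ℝ) : Prop where
  hT : (1 : EReal) < T
  f_nonneg : ∀ t r w F, 0 ≤ f t r w F
  per_lam : ∀ t r, lam t (r + 1) = lam t r
  per_mu : ∀ t r, mu t (r + 1) = mu t r
  per_phi : ∀ t r, phi t (r + 1) = phi t r
  per_f : ∀ t r w F, f t (r + 1) w F = f t r w F
  supp_bdd : ∀ T' : ℝ, 1 ≤ T' → (T' : EReal) < T →
    ∃ C : ℝ, ∀ t r w F, 1 ≤ t → t ≤ T' → f t r w F ≠ 0 → |w| ≤ C ∧ F ≤ C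
  reg_lam_t : ∀ t r, InDom T t → DifferentiableAt ℝ (fun s => lam s r) t
  reg_lam_r : ∀ t r, InDom T t → DifferentiableAt ℝ (fun x => lam t x) r
  reg_lam_tt : ∀ t r, InDom T t → DifferentiableAt ℝ (fun s => ptd lam s r) t
  reg_mu_t : ∀ t r, InDom T t → DifferentiableAt ℝ (fun s => mu s r) t
  reg_mu_r : ∀ t r, InDom T t → DifferentiableAt ℝ (fun x => mu t x) r
  reg_mu_rr : ∀ t r, InDom T t → DifferentiableAt ℝ (fun x => prd mu t x) r
  reg_phi_t : ∀ t r, InDom T t → DifferentiableAt ℝ (fun s => phi s r) t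
  reg_phi_r : ∀ t r, InDom T t → DifferentiableAt ℝ (fun x => phi t x) r
  reg_phi_tt : ∀ t r, InDom T t → DifferentiableAt ℝ (fun s => ptd phi s r) t
  reg_phi_rr : ∀ t r, InDom T t → DifferentiableAt ℝ (fun x => prd phi t x) r
  reg_f : ∀ t r w F, InDom T t → 0 ≤ F →
    DifferentiableAt ℝ (fun s => f s r w F) t ∧
    DifferentiableAt ℝ (fun x => f t x w F) r ∧
    DifferentiableAt ℝ (fun v => f t r v F) w
  vlasov : ∀ t r w F, InDom T t → 0 ≤ F →
    deriv (fun s => f s r w F) t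
      + Real.exp (mu t r - lam t r) * w / vq t w F * deriv (fun x => f t x w F) r
      - (ptd lam t r * w + Real.exp (mu t r - lam t r) * prd mu t r * vq t w F)
        * deriv (fun v => f t r v F) w = 0
  ee1 : ∀ t r, InDom T t →
    Real.exp (-2 * mu t r) * (2 * t * ptd lam t r + 1) + k
      = 8 * Real.pi * t ^ 2 * rho lam mu phi f t r
  ee2 : ∀ t r, InDom T t →
    Real.exp (-2 * mu t r) * (2 * t * ptd mu t r - 1) - k
      = 8 * Real.pi * t ^ 2 * pres lam mu phi f t r
  ee3 : ∀ t r, InDom T t →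
    prd mu t r = -(4 * Real.pi) * t * Real.exp (lam t r + mu t r) * jmom lam mu phi f t r
  ee4 : ∀ t r, InDom T t →
    Real.exp (-2 * lam t r)
        * (deriv (fun x => prd mu t x) r + prd mu t r * (prd mu t r - prd lam t r))
      - Real.exp (-2 * mu t r)
        * (deriv (fun s => ptd lam s r) t + (ptd lam t r + 1 / t) * (ptd lam t r - ptd mu t r))
      = 4 * Real.pi * qmom lam mu phi f t r
  wave : ∀ t r, InDom T t →
    Real.exp (-2 * lam t r) * deriv (fun x => prd phi t x) r
      - Real.exp (-2 * mu t r) * deriv (fun s => ptd phi s r) t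
      - Real.exp (-2 * mu t r) * (ptd lam t r - ptd mu t r + 2 / t) * ptd phi t r
      - Real.exp (-2 * lam t r) * (prd lam t r - prd mu t r) * prd phi t r = 0

/-- A regular solution on `[1, T)` is right maximal if it is not the restriction of a
regular solution on a strictly larger interval `[1, T')`. -/
def RightMaximal (k : ℝ) (T : EReal) (lam mu phi : ℝ → ℝ → ℝ)
    (f : ℝ → ℝ → ℝ → ℝ → ℝ) : Prop :=
  IsEVS k T lam mu phi f ∧
  ∀ (T' : EReal) (lam' mu' phi' : ℝ → ℝ → ℝ) (f' : ℝ → ℝ → ℝ → ℝ → ℝ),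
    T < T' → IsEVS k T' lam' mu' phi' f' →
    ¬ (∀ t r w F, InDom T t →
        lam' t r = lam t r ∧ mu' t r = mu t r ∧ phi' t r = phi t r ∧
        f' t r w F = f t r w F)

lemma pres_nonneg (lam mu phi : ℝ → ℝ → ℝ) (f : ℝ → ℝ → ℝ → ℝ → ℝ)
    (hf : ∀ t r w F, 0 ≤ f t r w F) (t r : ℝ) : 0 ≤ pres lam mu phi f t r := by
  unfold pres
  have h1 : 0 ≤ ∫ w : ℝ, ∫ F in Set.Ioi (0 : ℝ), w ^ 2 / vq t w F * f t r w F := by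
    apply integral_nonneg
    intro w
    apply integral_nonneg
    intro F
    exact mul_nonneg (div_nonneg (sq_nonneg w) (Real.sqrt_nonneg _)) (hf t r w F)
  have h2 : 0 ≤ Real.pi / t ^ 2 := div_nonneg Real.pi_pos.le (sq_nonneg t)
  have h3 : 0 ≤ Real.exp (-2 * mu t r) * (ptd phi t r) ^ 2
      + Real.exp (-2 * lam t r) * (prd phi t r) ^ 2 :=
    add_nonneg (mul_nonneg (Real.exp_pos _).le (sq_nonneg _))
      (mul_nonneg (Real.exp_pos _).le (sq_nonneg _))
  nlinarith [mul_nonneg h2 h1]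


/-- For a regular solution with `k ∈ {0, −1}`, the second Einstein
equation integrates to the stated identity for `e^{2μ}`, and since `p ≥ 0` this
yields the lower bound `e^{2μ(t,r)} ≥ t/(C₀ − k t)` where
`C₀ = k + sup{e^{−2μ̊(r)} : r ∈ [0,1]}`. -/
theorem eq_and_lower_bound_exp_two_mu (k : ℝ) (T : EReal) (lam mu phi : ℝ → ℝ → ℝ)
    (f : ℝ → ℝ → ℝ → ℝ → ℝ) (hk : k = 0 ∨ k = -1)
    (h : IsEVS k T lam mu phi f) :
    ∀ t r : ℝ, InDom T t →
      Real.exp (2 * mu t r)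
          = ((Real.exp (-2 * mu 1 r) + k) / t - k
              - 8 * Real.pi / t * ∫ s in (1 : ℝ)..t, s ^ 2 * pres lam mu phi f s r)⁻¹
        ∧ t / ((k + sSup ((fun r => Real.exp (-2 * mu 1 r)) '' Set.Icc (0 : ℝ) 1)) - k * t)
            ≤ Real.exp (2 * mu t r) := by
  intro t r ht
  obtain ⟨ht1, htT⟩ := ht
  have ht0 : (0 : ℝ) < t := lt_of_lt_of_le one_pos ht1
  -- every s ∈ [1, t] is in the domain
  have hdom : ∀ s : ℝ, s ∈ Set.Icc (1 : ℝ) t → InDom T s := by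
    intro s hs
    exact ⟨hs.1, lt_of_le_of_lt (EReal.coe_le_coe_iff.mpr hs.2) htT⟩
  -- derivative of G s = s * exp (-2 μ(s,r))
  set G : ℝ → ℝ := fun s => s * Real.exp (-2 * mu s r) with hG
  have hGderiv : ∀ s ∈ Set.Icc (1 : ℝ) t,
      HasDerivAt G (-k - 8 * Real.pi * s ^ 2 * pres lam mu phi f s r) s := by
    intro s hs
    have hds := hdom s hs
    have hmu : HasDerivAt (fun s' => mu s' r) (ptd mu s r) s :=
      (h.reg_mu_t s r hds).hasDerivAt
    have he : HasDerivAt (fun s' => Real.exp (-2 * mu s' r))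
        (Real.exp (-2 * mu s r) * (-2 * ptd mu s r)) s :=
      (hmu.const_mul (-2)).exp
    have hprod := (hasDerivAt_id' (x := s)).mul he
    have hval : 1 * Real.exp (-2 * mu s r) + s * (Real.exp (-2 * mu s r) * (-2 * ptd mu s r))
        = -k - 8 * Real.pi * s ^ 2 * pres lam mu phi f s r := by
      have := h.ee2 s r hds
      nlinarith [this]
    rw [hval] at hprod
    exact hprod
  have hGcont : ContinuousOn G (Set.Icc (1 : ℝ) t) := by
    intro s hs
    exact ((hGderiv s hs).differentiableAt.continuousAt).continuousWithinAt
  -- integrability of the nonnegative part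
  have hpnn : ∀ s, 0 ≤ pres lam mu phi f s r := fun s => pres_nonneg lam mu phi f h.f_nonneg s r
  set P : ℝ → ℝ := fun s => 8 * Real.pi * s ^ 2 * pres lam mu phi f s r with hP
  have hPnn : ∀ s, 0 ≤ P s := by
    intro s
    exact mul_nonneg (mul_nonneg (by positivity) (sq_nonneg s)) (hpnn s)
  have hHderiv : ∀ s ∈ Set.Ioo (1 : ℝ) t, HasDerivAt (fun s => -k * s - G s) (P s) s := by
    intro s hs
    have := ((hasDerivAt_id s).const_mul (-k)).sub (hGderiv s ⟨hs.1.le, hs.2.le⟩)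
    exact this.congr_deriv (by simp only [hP]; ring)
  have hHcont : ContinuousOn (fun s => -k * s - G s) (Set.Icc (1 : ℝ) t) :=
    ((continuous_const.mul continuous_id).continuousOn).sub hGcont
  have hPint : IntervalIntegrable P MeasureTheory.volume 1 t := by
    apply intervalIntegral.intervalIntegrable_deriv_of_nonneg (g := fun s => -k * s - G s)
    · rw [Set.uIcc_of_le ht1]; exact hHcont
    · intro s hs
      rw [min_eq_left ht1, max_eq_right ht1] at hs
      exact hHderiv s hs
    · intro s _; exact hPnn s
  have hG'int : IntervalIntegrable (fun s => -k - P s) MeasureTheory.volume 1 t :=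
    (intervalIntegrable_const (c := -k)).sub hPint
  -- FTC
  have hFTC : ∫ s in (1 : ℝ)..t, (-k - P s) = G t - G 1 := by
    apply intervalIntegral.integral_eq_sub_of_hasDerivAt
    · intro s hs
      rw [Set.uIcc_of_le ht1] at hs
      exact hGderiv s hs
    · exact hG'int
  have hIsplit : ∫ s in (1 : ℝ)..t, (-k - P s)
      = -k * (t - 1) - 8 * Real.pi * ∫ s in (1 : ℝ)..t, s ^ 2 * pres lam mu phi f s r := by
    rw [intervalIntegral.integral_sub intervalIntegrable_const hPint,
      intervalIntegral.integral_const]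
    have : ∫ s in (1 : ℝ)..t, P s
        = 8 * Real.pi * ∫ s in (1 : ℝ)..t, s ^ 2 * pres lam mu phi f s r := by
      rw [← intervalIntegral.integral_const_mul]
      apply intervalIntegral.integral_congr
      intro s hs
      ring
    rw [this]
    simp only [smul_eq_mul]
    ring
  set I : ℝ := ∫ s in (1 : ℝ)..t, s ^ 2 * pres lam mu phi f s r with hI
  have hkey : t * Real.exp (-2 * mu t r)
      = Real.exp (-2 * mu 1 r) - k * (t - 1) - 8 * Real.pi * I := by
    have := hFTC
    rw [hIsplit] at this
    simp only [hG] at this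
    linarith [this]
  have hInn : 0 ≤ I := by
    apply intervalIntegral.integral_nonneg ht1
    intro s hs
    exact mul_nonneg (sq_nonneg s) (hpnn s)
  -- exp identities
  have hEe : Real.exp (-2 * mu t r) * Real.exp (2 * mu t r) = 1 := by
    rw [← Real.exp_add]; ring_nf; exact Real.exp_zero
  have hEpos : (0 : ℝ) < Real.exp (-2 * mu t r) := Real.exp_pos _
  constructor
  · -- the identity
    have hval : (Real.exp (-2 * mu 1 r) + k) / t - k - 8 * Real.pi / t * I
        = Real.exp (-2 * mu t r) := by
      have h3 : t * ((Real.exp (-2 * mu 1 r) + k) / t - k - 8 * Real.pi / t * I)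
          = t * Real.exp (-2 * mu t r) := by
        field_simp
        ring_nf at hkey ⊢
        linarith [hkey]
      exact mul_left_cancel₀ ht0.ne' h3
    rw [hval, show (-2 : ℝ) * mu t r = -(2 * mu t r) by ring, Real.exp_neg, inv_inv]
  · -- the lower bound
    set S : ℝ := sSup ((fun r => Real.exp (-2 * mu 1 r)) '' Set.Icc (0 : ℝ) 1) with hS
    have hmu1cont : Continuous (fun x => mu 1 x) := by
      have : Differentiable ℝ (fun x => mu 1 x) := fun x =>
        h.reg_mu_r 1 x ⟨le_refl 1, h.hT⟩
      exact this.continuous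
    have hcont : Continuous (fun x => Real.exp (-2 * mu 1 x)) :=
      Real.continuous_exp.comp ((continuous_const.mul hmu1cont))
    have hbdd : BddAbove ((fun r => Real.exp (-2 * mu 1 r)) '' Set.Icc (0 : ℝ) 1) :=
      (isCompact_Icc.image hcont).bddAbove
    -- periodicity: value at r is attained in [0,1]
    have hper : Function.Periodic (fun x => mu 1 x) 1 := fun x => h.per_mu 1 x
    have hfr : mu 1 (Int.fract r) = mu 1 r := by
      have h2 := hper.sub_int_mul_eq (x := r) ⌊r⌋
      simp only [mul_one] at h2
      show mu 1 (r - ⌊r⌋) = mu 1 r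
      exact h2
    have hmem : Real.exp (-2 * mu 1 r)
        ∈ ((fun r => Real.exp (-2 * mu 1 r)) '' Set.Icc (0 : ℝ) 1) :=
      ⟨Int.fract r, ⟨Int.fract_nonneg r, (Int.fract_lt_one r).le⟩, by
        show Real.exp (-2 * mu 1 (Int.fract r)) = _
        rw [hfr]⟩
    have hle : Real.exp (-2 * mu 1 r) ≤ S := le_csSup hbdd hmem
    have hSpos : 0 < S := lt_of_lt_of_le (Real.exp_pos _) hle
    have hD : (0 : ℝ) < (k + S) - k * t := by
      rcases hk with hk | hk <;> rw [hk] <;> linarith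
    have htE : t * Real.exp (-2 * mu t r) ≤ (k + S) - k * t := by
      have h8 : 0 ≤ 8 * Real.pi * I := mul_nonneg (by positivity) hInn
      linarith [hkey, hle]
    rw [div_le_iff₀ hD]
    nlinarith [mul_le_mul_of_nonneg_right htE (Real.exp_pos (2 * mu t r)).le, hEe,
      Real.exp_pos (2 * mu t r)]
end
end

section
/- (Non-existence in spherical symmetry.) Let (f, λ, μ, φ) be a regular solution of the surface-symmetric Einstein–Vlasov–scalar field system in areal coordinates on [1,T) with k = 1. Then e^{−2μ(t,r)} ≤ (e^{−2μ̊(r)} + 1)/t − 1 for all t ∈ [1,T) and r ∈ ℝ; consequently T ≤ 1 + sup_r e^{−2μ̊(r)} < ∞, so no solution exists globally in the future. -/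
open MeasureTheory Real Filter

noncomputable section

lemma evs_monotone_bound (T : EReal) (lam mu phi : ℝ → ℝ → ℝ)
    (f : ℝ → ℝ → ℝ → ℝ → ℝ) (h : IsEVS 1 T lam mu phi f) :
    ∀ t r : ℝ, InDom T t →
      t * Real.exp (-2 * mu t r) + t ≤ Real.exp (-2 * mu 1 r) + 1 := by
  intro t r ht
  set g : ℝ → ℝ := fun s => s * Real.exp (-2 * mu s r) + s with hg
  have hdom : ∀ s ∈ Set.Icc (1:ℝ) t, InDom T s := fun s hs =>
    ⟨hs.1, lt_of_le_of_lt (EReal.coe_le_coe_iff.mpr hs.2) ht.2⟩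
  have hderiv : ∀ s : ℝ, InDom T s → HasDerivAt g
      (1 * Real.exp (-2 * mu s r)
        + s * (Real.exp (-2 * mu s r) * (-2 * ptd mu s r)) + 1) s := by
    intro s hs
    have hmu : HasDerivAt (fun u => mu u r) (ptd mu s r) s :=
      (h.reg_mu_t s r hs).hasDerivAt
    have hexp : HasDerivAt (fun u => Real.exp (-2 * mu u r))
        (Real.exp (-2 * mu s r) * (-2 * ptd mu s r)) s := (hmu.const_mul (-2)).exp
    exact ((hasDerivAt_id s).mul hexp).add (hasDerivAt_id s)
  have hanti : AntitoneOn g (Set.Icc 1 t) := by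
    apply antitoneOn_of_deriv_nonpos (convex_Icc 1 t)
    · exact fun s hs => ((hderiv s (hdom s hs)).continuousAt).continuousWithinAt
    · intro s hs
      rw [interior_Icc] at hs
      exact ((hderiv s (hdom s ⟨hs.1.le, hs.2.le⟩)).differentiableAt).differentiableWithinAt
    · intro s hs
      rw [interior_Icc] at hs
      have hsd : InDom T s := hdom s ⟨hs.1.le, hs.2.le⟩
      rw [(hderiv s hsd).deriv]
      have hee := h.ee2 s r hsd
      have hp := pres_nonneg lam mu phi f h.f_nonneg s r
      have h8 : 0 ≤ 8 * Real.pi * s ^ 2 * pres lam mu phi f s r := by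
        have : (0:ℝ) ≤ 8 * Real.pi * s ^ 2 := by positivity
        exact mul_nonneg this hp
      nlinarith [hee, h8]
  have h1m : (1:ℝ) ∈ Set.Icc (1:ℝ) t := ⟨le_refl 1, ht.1⟩
  have htm : t ∈ Set.Icc (1:ℝ) t := ⟨ht.1, le_refl t⟩
  have := hanti h1m htm ht.1
  simpa [hg] using this

/-- non-existence in spherical symmetry, `k = 1`: every regular
solution satisfies `e^{−2μ(t,r)} ≤ (e^{−2μ̊(r)} + 1)/t − 1`, hence
`T ≤ 1 + sup_r e^{−2μ̊(r)} < ∞`: no solution exists globally in the future. -/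
theorem no_global_existence_spherical (T : EReal) (lam mu phi : ℝ → ℝ → ℝ)
    (f : ℝ → ℝ → ℝ → ℝ → ℝ) (h : IsEVS 1 T lam mu phi f) :
    (∀ t r : ℝ, InDom T t →
      Real.exp (-2 * mu t r) ≤ (Real.exp (-2 * mu 1 r) + 1) / t - 1)
    ∧ T ≤ (((1 + sSup ((fun r => Real.exp (-2 * mu 1 r)) '' Set.Icc (0 : ℝ) 1)) : ℝ) : EReal)
    ∧ T ≠ ⊤ := by
  have hbd : ∀ t r : ℝ, InDom T t →
      Real.exp (-2 * mu t r) ≤ (Real.exp (-2 * mu 1 r) + 1) / t - 1 := by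
    intro t r ht
    have hm := evs_monotone_bound T lam mu phi f h t r ht
    have ht0 : (0:ℝ) < t := lt_of_lt_of_le one_pos ht.1
    have hdiv : Real.exp (-2 * mu t r) + 1 ≤ (Real.exp (-2 * mu 1 r) + 1) / t := by
      rw [le_div_iff₀ ht0]; nlinarith
    linarith
  refine ⟨hbd, ?_⟩
  -- continuity of r ↦ exp (-2 * mu 1 r)
  have hdom1 : InDom T 1 := ⟨le_refl 1, h.hT⟩
  have hcont : Continuous fun r => Real.exp (-2 * mu 1 r) := by
    have : Continuous fun r => mu 1 r := by
      refine continuous_iff_continuousAt.mpr fun r => ?_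
      exact (h.reg_mu_r 1 r hdom1).continuousAt
    continuity
  set S := (fun r => Real.exp (-2 * mu 1 r)) '' Set.Icc (0:ℝ) 1 with hS
  have hmemS : Real.exp (-2 * mu 1 0) ∈ S :=
    ⟨0, ⟨le_refl 0, zero_le_one⟩, rfl⟩
  have hbdd : BddAbove S := ((isCompact_Icc).image hcont).bddAbove
  have hle : Real.exp (-2 * mu 1 0) ≤ sSup S := le_csSup hbdd hmemS
  set c : ℝ := 1 + Real.exp (-2 * mu 1 0) with hc
  have hc1 : (1:ℝ) < c := by
    have := Real.exp_pos (-2 * mu 1 0); linarith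
  have hTc : T ≤ (c : EReal) := by
    by_contra hlt
    push_neg at hlt
    have hcdom : InDom T c := ⟨hc1.le, hlt⟩
    have := hbd c 0 hcdom
    have hc0 : c ≠ 0 := by linarith
    rw [show Real.exp (-2 * mu 1 0) + 1 = c by rw [hc]; ring, div_self hc0] at this
    have := Real.exp_pos (-2 * mu c 0)
    linarith
  have hcle : c ≤ 1 + sSup S := by linarith
  refine ⟨le_trans hTc (EReal.coe_le_coe_iff.mpr hcle), ?_⟩
  intro hTop
  rw [hTop] at hTc
  exact absurd hTc (by simp)
end
end

section
/- Consider a global solution (λ, μ, φ) on [1,∞) of the plane symmetric (k = 0) Einstein–scalar field system in areal coordinates with vanishing Vlasov matter (f ≡ 0), normalized so that e^{(μ−λ)(t,r)} = c·t for a constant c > 0, and suppose |∂_tφ · ∂_rφ|(s,r) ≤ C₁/s for all s ≥ 1. Let (r(s), w(s)) solve the geodesic equations in coordinate time, so that w satisfies dw/ds = 4π s e^{2μ}( j·√(m² + w² + F/s²) − ρ·w ) + w/(2s), where m ≥ 0 and F ≥ 0 are constants, ρ = ½(e^{−2μ}(∂_tφ)² + e^{−2λ}(∂_rφ)²) and j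 = −e^{−(λ+μ)} ∂_tφ ∂_rφ are evaluated at (s, r(s)). Then there is a constant C > 0 such that |w(t)| ≤ C t² for all t ≥ 1. -/
open MeasureTheory Real Filter

noncomputable section

/-! For `f ≡ 0` one has `|j| ≤ ρ` pointwise, and the normalization `e^{μ-λ} = c t` turns the
bound on `∂_tφ ∂_rφ` into `e^{2μ} |j| ≤ c C₁`. Since `√(m² + w² + F/s²) ≤ |w| + √(m² + F)`, the
damping term `-ρ w²` absorbs the part of `j w √(m² + w² + F/s²)` that is quadratic in `w`, so
`w w' ≤ A s |w| + w² / (2s)` with `A = 4π c C₁ √(m² + F)`. Comparing `w²` with the barrier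
`B² s⁴`, which the solution cannot cross once `2A < 3B`, gives `|w| ≤ B s²`. -/

lemma rho_zero (lam mu phi : ℝ → ℝ → ℝ) (t r : ℝ) :
    rho lam mu phi (fun _ _ _ _ => 0) t r
      = 1 / 2 * (exp (-2 * mu t r) * ptd phi t r ^ 2 + exp (-2 * lam t r) * prd phi t r ^ 2) := by
  simp [rho]

lemma jmom_zero (lam mu phi : ℝ → ℝ → ℝ) (t r : ℝ) :
    jmom lam mu phi (fun _ _ _ _ => 0) t r
      = -(exp (-(lam t r + mu t r)) * ptd phi t r * prd phi t r) := by
  simp [jmom]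

lemma abs_jmom_zero (lam mu phi : ℝ → ℝ → ℝ) (t r : ℝ) :
    |jmom lam mu phi (fun _ _ _ _ => 0) t r|
      = exp (-(lam t r + mu t r)) * |ptd phi t r * prd phi t r| := by
  rw [jmom_zero, abs_neg, mul_assoc, abs_mul, abs_of_pos (exp_pos _)]

lemma abs_jmom_zero_le_rho_zero (lam mu phi : ℝ → ℝ → ℝ) (t r : ℝ) :
    |jmom lam mu phi (fun _ _ _ _ => 0) t r| ≤ rho lam mu phi (fun _ _ _ _ => 0) t r := by
  set x := exp (-mu t r) * |ptd phi t r|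
  set y := exp (-lam t r) * |prd phi t r|
  have hxy : |jmom lam mu phi (fun _ _ _ _ => 0) t r| = x * y := by
    rw [abs_jmom_zero, abs_mul, neg_add, exp_add]; ring
  have hsq : rho lam mu phi (fun _ _ _ _ => 0) t r = 1 / 2 * (x ^ 2 + y ^ 2) := by
    simp only [rho_zero, x, y, mul_pow, ← exp_nat_mul, sq_abs]; ring_nf
  rw [hxy, hsq]
  nlinarith [sq_nonneg (x - y)]

lemma exp_two_mul_mu_mul_abs_jmom_zero (lam mu phi : ℝ → ℝ → ℝ) (t r : ℝ) :
    exp (2 * mu t r) * |jmom lam mu phi (fun _ _ _ _ => 0) t r|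
      = exp (mu t r - lam t r) * |ptd phi t r * prd phi t r| := by
  rw [abs_jmom_zero, ← mul_assoc, ← exp_add]; ring_nf

lemma sqrt_add_sq_add_div_le {m F s : ℝ} (v : ℝ) (hF : 0 ≤ F) (hs : 1 ≤ s) :
    √(m ^ 2 + v ^ 2 + F / s ^ 2) ≤ |v| + √(m ^ 2 + F) := by
  have hFs : F / s ^ 2 ≤ F := div_le_self hF (one_le_pow₀ hs)
  rw [sqrt_le_iff]
  refine ⟨by positivity, ?_⟩
  nlinarith [sq_abs v, sq_sqrt (by positivity : 0 ≤ m ^ 2 + F), abs_nonneg v,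
    sqrt_nonneg (m ^ 2 + F)]

lemma mul_mul_sub_le_of_abs_le {J ρ G v S : ℝ} (hJ : |J| ≤ ρ) (hG₀ : 0 ≤ G)
    (hG : G ≤ |v| + S) : v * (J * G - ρ * v) ≤ |J| * |v| * S :=
  calc v * (J * G - ρ * v) ≤ |J| * |v| * (|v| + S) - ρ * v ^ 2 := by
        have : v * J * G ≤ |J| * |v| * (|v| + S) := by
          rw [mul_comm v]
          exact (le_abs_self _).trans (by rw [abs_mul, abs_mul, abs_of_nonneg hG₀]; gcongr)
        nlinarith
    _ = |J| * |v| * S + (|J| - ρ) * v ^ 2 := by rw [← sq_abs v]; ring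
    _ ≤ |J| * |v| * S := by nlinarith [sq_nonneg v]

lemma abs_le_mul_sq_of_mul_deriv_le {w w' : ℝ → ℝ} {A B : ℝ}
    (hw : ∀ s, 1 ≤ s → HasDerivAt w (w' s) s)
    (hww' : ∀ s, 1 ≤ s → w s * w' s ≤ A * s * |w s| + w s ^ 2 / (2 * s))
    (hB : 0 < B) (h₁ : |w 1| ≤ B) (hAB : 2 * A < 3 * B) :
    ∀ t, 1 ≤ t → |w t| ≤ B * t ^ 2 := by
  have hsq : ∀ s, 1 ≤ s → HasDerivAt (fun x => w x ^ 2) (2 * w s * w' s) s := fun s hs => by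
    simpa using (hw s hs).fun_pow 2
  have hfence : ∀ t, 1 ≤ t → w t ^ 2 ≤ B ^ 2 * t ^ 4 := by
    intro t ht
    refine image_le_of_deriv_right_lt_deriv_boundary (f := fun x => w x ^ 2)
      (fun x hx => (hsq x hx.1).continuousAt.continuousWithinAt)
      (fun x hx => (hsq x hx.1).hasDerivWithinAt) ?_
      (fun x => by simpa using (hasDerivAt_pow 4 x).const_mul (B ^ 2)) ?_ ⟨ht, le_rfl⟩
    · simpa [sq_abs] using pow_le_pow_left₀ (abs_nonneg _) h₁ 2
    · intro x ⟨hx, _⟩ hwx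
      have habs : |w x| = B * x ^ 2 := by
        rw [← sq_abs] at hwx
        exact (pow_left_inj₀ (abs_nonneg _) (by positivity) two_ne_zero).mp (by rw [hwx]; ring)
      have hww'x := hww' x hx
      rw [← sq_abs, habs] at hww'x
      have hx₀ : 0 < x := by linarith
      have hle : 2 * w x * w' x ≤ (2 * A * B + B ^ 2) * x ^ 3 := by
        field_simp at hww'x; nlinarith
      have hlt : (2 * A * B + B ^ 2) * x ^ 3 < B ^ 2 * (4 * x ^ 3) := by
        nlinarith [mul_pos (mul_pos hB (by linarith : 0 < 3 * B - 2 * A)) (pow_pos hx₀ 3)]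
      linarith
  intro t ht
  have hsq_le := hfence t ht
  rw [← sq_abs, show B ^ 2 * t ^ 4 = (B * t ^ 2) ^ 2 by ring] at hsq_le
  exact (pow_le_pow_iff_left₀ (abs_nonneg _) (by positivity) two_ne_zero).mp hsq_le

lemma exists_abs_le_mul_sq_of_mul_deriv_le {w w' : ℝ → ℝ} {A : ℝ}
    (hw : ∀ s, 1 ≤ s → HasDerivAt w (w' s) s)
    (hww' : ∀ s, 1 ≤ s → w s * w' s ≤ A * s * |w s| + w s ^ 2 / (2 * s)) :
    ∃ C, 0 < C ∧ ∀ t, 1 ≤ t → |w t| ≤ C * t ^ 2 :=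
  ⟨|w 1| + |A| + 1, by positivity, abs_le_mul_sq_of_mul_deriv_le hw hww' (by positivity)
    (by linarith [abs_nonneg A]) (by linarith [le_abs_self A, abs_nonneg A, abs_nonneg (w 1)])⟩

lemma mul_geodesic_w_rhs_le (lam mu phi : ℝ → ℝ → ℝ) {c C₁ m F s r : ℝ} (v : ℝ)
    (hF : 0 ≤ F) (hs : 1 ≤ s) (hnorm : exp (mu s r - lam s r) = c * s)
    (hbd : |ptd phi s r * prd phi s r| ≤ C₁ / s) :
    v * (4 * π * s * exp (2 * mu s r) *
          (jmom lam mu phi (fun _ _ _ _ => 0) s r * √(m ^ 2 + v ^ 2 + F / s ^ 2)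
            - rho lam mu phi (fun _ _ _ _ => 0) s r * v)
        + v / (2 * s))
      ≤ 4 * π * c * C₁ * √(m ^ 2 + F) * s * |v| + v ^ 2 / (2 * s) := by
  set J := jmom lam mu phi (fun _ _ _ _ => 0) s r
  have hs₀ : 0 < s := by linarith
  have hmatter : v * (J * √(m ^ 2 + v ^ 2 + F / s ^ 2) - rho lam mu phi (fun _ _ _ _ => 0) s r * v)
      ≤ |J| * |v| * √(m ^ 2 + F) :=
    mul_mul_sub_le_of_abs_le (abs_jmom_zero_le_rho_zero lam mu phi s r) (sqrt_nonneg _)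
      (sqrt_add_sq_add_div_le v hF hs)
  have hcoupling : exp (2 * mu s r) * |J| ≤ c * C₁ := by
    have hcs : 0 ≤ c * s := hnorm ▸ (exp_pos _).le
    calc exp (2 * mu s r) * |J| = c * s * |ptd phi s r * prd phi s r| := by
          rw [exp_two_mul_mu_mul_abs_jmom_zero, hnorm]
      _ ≤ c * s * (C₁ / s) := by gcongr
      _ = c * C₁ := by field_simp
  calc _ = 4 * π * s * exp (2 * mu s r) * (v * (J * √(m ^ 2 + v ^ 2 + F / s ^ 2)
            - rho lam mu phi (fun _ _ _ _ => 0) s r * v)) + v ^ 2 / (2 * s) := by ring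
    _ ≤ 4 * π * s * (exp (2 * mu s r) * |J|) * |v| * √(m ^ 2 + F) + v ^ 2 / (2 * s) := by
        nlinarith [mul_le_mul_of_nonneg_left hmatter
          (by positivity : 0 ≤ 4 * π * s * exp (2 * mu s r))]
    _ ≤ 4 * π * s * (c * C₁) * |v| * √(m ^ 2 + F) + v ^ 2 / (2 * s) := by gcongr
    _ = _ := by ring

theorem geodesic_w_bound_general (lam mu phi : ℝ → ℝ → ℝ) (c C₁ m F : ℝ)
    (hF : 0 ≤ F)
    (hnorm : ∀ t r : ℝ, 1 ≤ t → Real.exp (mu t r - lam t r) = c * t)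
    (hbd : ∀ s r : ℝ, 1 ≤ s → |ptd phi s r * prd phi s r| ≤ C₁ / s)
    (rr w : ℝ → ℝ)
    (hwODE : ∀ s : ℝ, 1 ≤ s → HasDerivAt w
      (4 * Real.pi * s * Real.exp (2 * mu s (rr s)) *
          (jmom lam mu phi (fun _ _ _ _ => 0) s (rr s)
              * Real.sqrt (m ^ 2 + w s ^ 2 + F / s ^ 2)
            - rho lam mu phi (fun _ _ _ _ => 0) s (rr s) * w s)
        + w s / (2 * s)) s) :
    ∃ C : ℝ, 0 < C ∧ ∀ t : ℝ, 1 ≤ t → |w t| ≤ C * t ^ 2 :=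
  exists_abs_le_mul_sq_of_mul_deriv_le hwODE fun s hs =>
    mul_geodesic_w_rhs_le lam mu phi (w s) hF hs (hnorm s _ hs) (hbd s _ hs)

/-- for a global plane symmetric solution of the Einstein–scalar
field system (`f ≡ 0`) normalized so that `e^{μ−λ} = c t`, with
`|∂_tφ ∂_rφ| ≤ C₁/s`, any solution of the geodesic equations in coordinate time
satisfies `|w(t)| ≤ C t²`. -/
theorem geodesic_w_bound (lam mu phi : ℝ → ℝ → ℝ) (c C₁ m F : ℝ)
    (hc : 0 < c) (hm : 0 ≤ m) (hF : 0 ≤ F)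
    (h : IsEVS 0 ⊤ lam mu phi (fun _ _ _ _ => 0))
    (hnorm : ∀ t r : ℝ, 1 ≤ t → Real.exp (mu t r - lam t r) = c * t)
    (hbd : ∀ s r : ℝ, 1 ≤ s → |ptd phi s r * prd phi s r| ≤ C₁ / s)
    (rr w : ℝ → ℝ)
    (hrODE : ∀ s : ℝ, 1 ≤ s → HasDerivAt rr
      (Real.exp (mu s (rr s) - lam s (rr s)) * w s
        / Real.sqrt (m ^ 2 + w s ^ 2 + F / s ^ 2)) s)
    (hwODE : ∀ s : ℝ, 1 ≤ s → HasDerivAt w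
      (4 * Real.pi * s * Real.exp (2 * mu s (rr s)) *
          (jmom lam mu phi (fun _ _ _ _ => 0) s (rr s)
              * Real.sqrt (m ^ 2 + w s ^ 2 + F / s ^ 2)
            - rho lam mu phi (fun _ _ _ _ => 0) s (rr s) * w s)
        + w s / (2 * s)) s) :
    ∃ C : ℝ, 0 < C ∧ ∀ t : ℝ, 1 ≤ t → |w t| ≤ C * t ^ 2 :=
  geodesic_w_bound_general lam mu phi c C₁ m F hF hnorm hbd rr w hwODE
end
end
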